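/- arXiv:2201.10765 — 4 statements merged into one kernel-verified Lean document; each statement's English description precedes it below -/
import Mathlib

section
/- Let $\Gamma$ be a group acting on an infinite set $I$ such that every orbit is infinite. Then for any two finite subsets $A, B \subseteq I$ there exists $s \in \Gamma$ such that $sA \cap B = \emptyset$. -/
/-!
The elements `s` with `s • A` meeting `B` are covered by the finitely many sets
`{s | s • a = b}` with `a ∈ A`, `b ∈ B`, each empty or a left coset of the stabilizer of `a`.
If they covered all of `Γ`, B. H. Neumann's lemma would give one of these stabilizers finite
index, i.e. a finite orbit.
-/

open scoped Pointwise

namespace MulAction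

variable {Γ I : Type*} [Group Γ] [MulAction Γ I]

theorem exists_setOf_smul_eq_subset_leftCoset_stabilizer (a b : I) :
    ∃ h : Γ, {g : Γ | g • a = b} ⊆ h • (stabilizer Γ a : Set Γ) := by
  by_cases hb : b ∈ orbit Γ a
  · obtain ⟨h, rfl⟩ := hb
    refine ⟨h, fun g (hg : g • a = h • a) => mem_leftCoset_iff h |>.2 ?_⟩
    rw [SetLike.mem_coe, mem_stabilizer_iff, mul_smul, hg, inv_smul_smul]
  · exact ⟨1, fun g (hg : g • a = b) => absurd ⟨g, hg⟩ hb⟩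

theorem not_finiteIndex_stabilizer_of_orbit_infinite {a : I} (ha : (orbit Γ a).Infinite) :
    ¬ (stabilizer Γ a).FiniteIndex := fun h =>
  h.index_ne_zero <| (index_stabilizer Γ a).trans ha.ncard

theorem exists_smul_inter_eq_empty_of_orbit_infinite (horb : ∀ i : I, (orbit Γ i).Infinite)
    {A B : Set I} (hA : A.Finite) (hB : B.Finite) : ∃ s : Γ, s • A ∩ B = ∅ := by
  by_contra! hmeet
  choose h hh using fun p : I × I =>
    exists_setOf_smul_eq_subset_leftCoset_stabilizer (Γ := Γ) p.1 p.2
  have hcover : ⋃ p ∈ (hA.prod hB).toFinset, h p • (stabilizer Γ p.1 : Set Γ) = Set.univ := by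
    refine Set.eq_univ_of_forall fun g => ?_
    obtain ⟨_, ⟨a, ha, rfl⟩, hb⟩ := hmeet g
    exact Set.mem_biUnion (x := (a, g • a)) (by simpa using ⟨ha, hb⟩) (hh _ rfl)
  obtain ⟨p, -, hp⟩ := Subgroup.exists_finiteIndex_of_leftCoset_cover hcover
  exact not_finiteIndex_stabilizer_of_orbit_infinite (horb p.1) hp

end MulAction

theorem stmt1_general {Γ I : Type*} [Group Γ] [MulAction Γ I]
    (horb : ∀ i : I, (MulAction.orbit Γ i).Infinite)
    (A B : Set I) (hA : A.Finite) (hB : B.Finite) :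
    ∃ s : Γ, (s • A) ∩ B = ∅ :=
  MulAction.exists_smul_inter_eq_empty_of_orbit_infinite horb hA hB

/-- If all orbits of `Γ` acting on the infinite set `I` are infinite,
then any finite subset can be moved off any other finite subset. -/
theorem stmt1 {Γ I : Type*} [Group Γ] [MulAction Γ I] [Infinite I]
    (horb : ∀ i : I, (MulAction.orbit Γ i).Infinite)
    (A B : Set I) (hA : A.Finite) (hB : B.Finite) :
    ∃ s : Γ, (s • A) ∩ B = ∅ :=
  stmt1_general horb A B hA hB
end

section
/- Let $\Gamma$ act on a set $I$ such that for every $g \in \Gamma \setminus \{e\}$ there are infinitely many $i \in I$ with $g \cdot i \neq i$, and let $\Lambda$ act freely on a set $X_0$ with the discrete topology (with $|X_0| \geq 2$). If the stabilizer of each $i \in I$ acts with infinite orbits on $I \setminus \{i\}$, then the generalized wreath product action of $\Lambda \wr_I \Gamma$ on $X_0^I$ is topologically free: for every nontrivial element $ag$ (with $a \in \oplus_I \Lambda$, $g \in \Gamma$) the fixed point set $\mathrm{Fix}(ag)$ has empty interior in $X_0^I$. -/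
/-- Topological freeness of the generalized wreath product action
of `Λ ≀_I Γ` on `X0^I`: every nontrivial element `ag` has fixed point set with
empty interior. An element of `Λ ≀_I Γ = (⊕_I Λ) ⋊ Γ` is encoded as a pair
`(a, g)` with `a : I → Λ` finitely supported and `g : Γ`; it acts by
`((a,g) • x) i = a i • x (g⁻¹ • i)`. -/
theorem stmt2 {Γ I Λ X0 : Type*} [Group Γ] [MulAction Γ I] [Group Λ] [MulAction Λ X0]
    [Fintype X0] [TopologicalSpace X0] [DiscreteTopology X0]
    (hcard : 2 ≤ Fintype.card X0)
    (hfree : ∀ (l : Λ) (x : X0), l • x = x → l = 1)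
    (hmoved : ∀ g : Γ, g ≠ 1 → {i : I | g • i ≠ i}.Infinite)
    (hstab : ∀ i j : I, j ≠ i → (MulAction.orbit (MulAction.stabilizer Γ i) j).Infinite)
    (a : I → Λ) (ha : (Function.mulSupport a).Finite) (g : Γ)
    (hnt : ¬(a = 1 ∧ g = 1)) :
    interior {x : I → X0 | ∀ i, a i • x (g⁻¹ • i) = x i} = ∅ := by
  classical
  rw [Set.eq_empty_iff_forall_notMem]
  intro x hx
  have hxF : ∀ i, a i • x (g⁻¹ • i) = x i := interior_subset hx
  by_cases hg : g = 1
  · subst hg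
    push_neg at hnt
    obtain ⟨i0, hi0⟩ := Function.ne_iff.mp (fun h => hnt h rfl)
    have h := hxF i0
    simp only [inv_one, one_smul] at h
    exact hi0 (hfree _ _ h)
  · obtain ⟨S, u, hu, hsub⟩ := isOpen_pi_iff.mp isOpen_interior x hx
    have hfin : ((↑S : Set I) ∪ (g • ·) '' ↑S).Finite :=
      S.finite_toSet.union (S.finite_toSet.image _)
    obtain ⟨i, himoved, hinot⟩ := ((hmoved g hg).diff hfin).nonempty
    have hiS : i ∉ (↑S : Set I) := fun h => hinot (Or.inl h)
    have hgiS : g⁻¹ • i ∉ (↑S : Set I) := by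
      intro h
      exact hinot (Or.inr ⟨g⁻¹ • i, h, smul_inv_smul g i⟩)
    have hne : g⁻¹ • i ≠ i := by
      intro h
      apply himoved
      conv_lhs => rw [← h]
      exact smul_inv_smul g i
    obtain ⟨w, hw⟩ := Fintype.exists_ne_of_one_lt_card (by omega) (x i)
    set y : I → X0 := Function.update x (g⁻¹ • i) ((a i)⁻¹ • w) with hy
    have hyS : y ∈ (↑S : Set I).pi u := by
      intro j hj
      rw [hy, Function.update_of_ne (fun h : j = g⁻¹ • i => hgiS (h ▸ hj))]
      exact (hu j hj).2
    have hyF : ∀ k, a k • y (g⁻¹ • k) = y k := interior_subset (hsub hyS)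
    have h := hyF i
    rw [hy, Function.update_self, Function.update_of_ne hne.symm, smul_inv_smul] at h
    exact hw h
end

section
/- Let $\Gamma_1$ be a finitely generated group with finite symmetric generating set $T$, and let $g_0 \in \Gamma_1$ have infinite order with compression function $\rho_{g_0}(x) = \min\{\ell_T(g_0^n) : n \geq x\}$. Fix $R \geq 0$ and for $n \geq 0$ set $F_n = B(\rho_{g_0}(n)/8 + R) \times B(\rho_{g_0}(n)/8 + R) \subseteq \Gamma_1 \times \Gamma_1$, where $B(r)$ denotes the ball of radius $r$ in the word metric $\ell_T$. Let $s = (g_0, e)$ act on $I = \Gamma_1$ by the left-right translation action of $\Gamma_1 \times \Gamma_1$. Then the set $E = (\bigcup_{n \geq 0} s^{-n} \cdot (F_n \cdot e)) \cap (\bigcup_{n \geq 0} s^n \cdot (F_n \cdot e))$ is finite; in fact, $E$ is contained in $B' \cdot e$, where $B'$ is the ball of radius $\ell_T(g_0)\, \rho_{g_0}^{-1}(8R) + 4R$ around the identity in $\Gamma_1 \times \Gamma_1$ with respect to the generating set $T' = \{(t,e),(e,t) : t \in T\}$. -/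
/-- Word length of `g` with respect to a generating set `T`. -/
noncomputable def wordLength {G : Type*} [Group G] (T : Set G) (g : G) : ℕ :=
  sInf {n : ℕ | ∃ l : List G, l.length = n ∧ (∀ x ∈ l, x ∈ T) ∧ l.prod = g}

/-- Compression function `ρ_{g0}(x) = min {ℓ_T(g0^n) : n ≥ x}`. -/
noncomputable def compression {G : Type*} [Group G] (T : Set G) (g0 : G) (x : ℕ) : ℕ :=
  sInf {m : ℕ | ∃ n : ℕ, x ≤ n ∧ m = wordLength T (g0 ^ n)}

/-- Generalized inverse `ρ_{g0}⁻¹(c) = sup {λ : ρ_{g0}(λ) ≤ c}`. -/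
noncomputable def compressionInv {G : Type*} [Group G] (T : Set G) (g0 : G) (c : ℝ) : ℕ :=
  sSup {n : ℕ | (compression T g0 n : ℝ) ≤ c}

section Aux

variable {G : Type*} [Group G]

lemma exists_word {T : Set G} (hsym : ∀ t ∈ T, t⁻¹ ∈ T) (hgen : Subgroup.closure T = ⊤)
    (g : G) : ∃ l : List G, (∀ x ∈ l, x ∈ T) ∧ l.prod = g := by
  have hg : g ∈ (Subgroup.closure T).toSubmonoid := by rw [hgen]; trivial
  rw [Subgroup.closure_toSubmonoid] at hg
  obtain ⟨l, hl, hp⟩ := Submonoid.exists_list_of_mem_closure hg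
  refine ⟨l, fun x hx => ?_, hp⟩
  rcases hl x hx with h | h
  · exact h
  · have := hsym x⁻¹ (by simpa using h)
    simpa using this

lemma wordLength_le (T : Set G) {g : G} {l : List G} (hl : ∀ x ∈ l, x ∈ T)
    (hp : l.prod = g) : wordLength T g ≤ l.length :=
  Nat.sInf_le ⟨l, rfl, hl, hp⟩

lemma exists_wordLength {T : Set G} (hsym : ∀ t ∈ T, t⁻¹ ∈ T)
    (hgen : Subgroup.closure T = ⊤) (g : G) :
    ∃ l : List G, l.length = wordLength T g ∧ (∀ x ∈ l, x ∈ T) ∧ l.prod = g := by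
  have hne : {n : ℕ | ∃ l : List G, l.length = n ∧ (∀ x ∈ l, x ∈ T) ∧ l.prod = g}.Nonempty := by
    obtain ⟨l, h1, h2⟩ := exists_word hsym hgen g
    exact ⟨l.length, l, rfl, h1, h2⟩
  exact Nat.sInf_mem hne

lemma wordLength_mul_le {T : Set G} (hsym : ∀ t ∈ T, t⁻¹ ∈ T)
    (hgen : Subgroup.closure T = ⊤) (g h : G) :
    wordLength T (g * h) ≤ wordLength T g + wordLength T h := by
  obtain ⟨l1, hl1, he1, hp1⟩ := exists_wordLength hsym hgen g
  obtain ⟨l2, hl2, he2, hp2⟩ := exists_wordLength hsym hgen h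
  have := wordLength_le T (l := l1 ++ l2) (g := g * h)
    (fun x hx => by rcases List.mem_append.1 hx with h | h; exacts [he1 x h, he2 x h])
    (by rw [List.prod_append, hp1, hp2])
  simpa [hl1, hl2] using this

lemma wordLength_inv_le {T : Set G} (hsym : ∀ t ∈ T, t⁻¹ ∈ T)
    (hgen : Subgroup.closure T = ⊤) (g : G) :
    wordLength T g⁻¹ ≤ wordLength T g := by
  obtain ⟨l, hl, he, hp⟩ := exists_wordLength hsym hgen g
  have := wordLength_le T (l := (l.map fun x => x⁻¹).reverse) (g := g⁻¹)
    (fun x hx => by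
      simp only [List.mem_reverse, List.mem_map] at hx
      obtain ⟨y, hy, rfl⟩ := hx
      exact hsym y (he y hy))
    (by rw [← List.prod_inv_reverse, hp])
  simpa [hl] using this

lemma wordLength_pow_le {T : Set G} (hsym : ∀ t ∈ T, t⁻¹ ∈ T)
    (hgen : Subgroup.closure T = ⊤) (g : G) (n : ℕ) :
    wordLength T (g ^ n) ≤ n * wordLength T g := by
  induction n with
  | zero =>
    simp only [pow_zero, Nat.zero_mul, Nat.le_zero]
    exact Nat.le_zero.1 (wordLength_le T (l := ([] : List G)) (by simp) (by simp))
  | succ n ih =>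
    calc wordLength T (g ^ (n + 1)) = wordLength T (g ^ n * g) := by rw [pow_succ]
      _ ≤ wordLength T (g ^ n) + wordLength T g := wordLength_mul_le hsym hgen _ _
      _ ≤ n * wordLength T g + wordLength T g := by omega
      _ = (n + 1) * wordLength T g := by ring

lemma compression_le (T : Set G) (g0 : G) {x k : ℕ} (h : x ≤ k) :
    compression T g0 x ≤ wordLength T (g0 ^ k) :=
  Nat.sInf_le ⟨k, h, rfl⟩

lemma compression_exists (T : Set G) (g0 : G) (x : ℕ) :
    ∃ k, x ≤ k ∧ compression T g0 x = wordLength T (g0 ^ k) := by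
  have hne : {m : ℕ | ∃ n : ℕ, x ≤ n ∧ m = wordLength T (g0 ^ n)}.Nonempty :=
    ⟨wordLength T (g0 ^ x), x, le_rfl, rfl⟩
  exact Nat.sInf_mem hne

lemma compression_mono (T : Set G) (g0 : G) {x y : ℕ} (h : x ≤ y) :
    compression T g0 x ≤ compression T g0 y := by
  obtain ⟨k, hk, he⟩ := compression_exists T g0 y
  rw [he]
  exact compression_le T g0 (h.trans hk)

lemma ball_finite {H : Type*} [Monoid H] {S : Set H} (hS : S.Finite) (N : ℕ) :
    {g : H | ∃ l : List H, l.length ≤ N ∧ (∀ x ∈ l, x ∈ S) ∧ l.prod = g}.Finite := by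
  haveI := hS.to_subtype
  apply Set.Finite.subset
    ((List.finite_length_le S N).image (fun l : List S => (l.map Subtype.val).prod))
  rintro g ⟨l, h1, h2, rfl⟩
  refine ⟨l.pmap (fun x hx => (⟨x, hx⟩ : S)) h2, by simpa using h1, ?_⟩
  simp [List.map_pmap]

/-- A bound for the set appearing in `compressionInv`. -/
lemma compression_set_bdd {G : Type*} [Group G] (T : Finset G)
    (hsym : ∀ t ∈ (T : Set G), t⁻¹ ∈ (T : Set G)) (hgen : Subgroup.closure (T : Set G) = ⊤)
    {g0 : G} (hg0 : ¬ IsOfFinOrder g0) (c : ℝ) :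
    BddAbove {n : ℕ | (compression (T : Set G) g0 n : ℝ) ≤ c} := by
  set F : Set G := {g : G | ∃ l : List G, l.length ≤ ⌊c⌋₊ ∧ (∀ x ∈ l, x ∈ (T : Set G)) ∧
    l.prod = g} with hF
  have hFfin : F.Finite := ball_finite T.finite_toSet _
  have hinj : Function.Injective (fun n : ℕ => g0 ^ n) :=
    injective_pow_iff_not_isOfFinOrder.2 hg0
  have hSfin : {k : ℕ | g0 ^ k ∈ F}.Finite := hFfin.preimage hinj.injOn
  obtain ⟨K, hK⟩ := hSfin.bddAbove
  refine ⟨K, fun n hn => ?_⟩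
  obtain ⟨k, hk, he⟩ := compression_exists (T : Set G) g0 n
  have hle : (wordLength (T : Set G) (g0 ^ k) : ℝ) ≤ c := by rw [← he]; exact hn
  have hfl : wordLength (T : Set G) (g0 ^ k) ≤ ⌊c⌋₊ := Nat.le_floor hle
  obtain ⟨l, hl1, hl2, hl3⟩ := exists_wordLength hsym hgen (g0 ^ k)
  have hkF : g0 ^ k ∈ F := ⟨l, by omega, hl2, hl3⟩
  exact hk.trans (hK hkF)

end Aux

/-- For the left-right translation action of `Γ₁ × Γ₁` on `Γ₁` and
`s = (g₀, e)`, with `F_n = B(ρ(n)/8 + R) × B(ρ(n)/8 + R)`, the set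
`E = (⋃_n s^{-n}(F_n · e)) ∩ (⋃_n s^n(F_n · e))` is finite; more precisely it is
contained in the image of the `T'`-ball of radius `ℓ_T(g₀) ρ⁻¹(8R) + 4R` applied to `e`. -/
theorem stmt9 {Γ1 : Type*} [Group Γ1] (T : Finset Γ1)
    (hsym : ∀ t ∈ T, t⁻¹ ∈ T) (hgen : Subgroup.closure (T : Set Γ1) = ⊤)
    (g0 : Γ1) (hg0 : ¬ IsOfFinOrder g0) (R : ℝ) (hR : 0 ≤ R) :
    let ℓ := wordLength (T : Set Γ1)
    let ρ := compression (T : Set Γ1) g0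
    let T' : Set (Γ1 × Γ1) := {p | ∃ t ∈ T, p = (t, 1) ∨ p = (1, t)}
    let A : Set Γ1 := {w | ∃ (n : ℕ) (g h : Γ1), (ℓ g : ℝ) ≤ (ρ n : ℝ) / 8 + R ∧
      (ℓ h : ℝ) ≤ (ρ n : ℝ) / 8 + R ∧ w = g0⁻¹ ^ n * (g * h⁻¹)}
    let B : Set Γ1 := {w | ∃ (n : ℕ) (g h : Γ1), (ℓ g : ℝ) ≤ (ρ n : ℝ) / 8 + R ∧
      (ℓ h : ℝ) ≤ (ρ n : ℝ) / 8 + R ∧ w = g0 ^ n * (g * h⁻¹)}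
    (A ∩ B).Finite ∧
      A ∩ B ⊆ {w | ∃ p : Γ1 × Γ1, (wordLength T' p : ℝ) ≤
        (ℓ g0 : ℝ) * (compressionInv (T : Set Γ1) g0 (8 * R) : ℝ) + 4 * R ∧
        w = p.1 * p.2⁻¹} := by
  intro ℓ ρ T' A B
  have hsym' : ∀ t ∈ (T : Set Γ1), t⁻¹ ∈ (T : Set Γ1) := by simpa using hsym
  set K : ℕ := compressionInv (T : Set Γ1) g0 (8 * R) with hK
  set C0 : ℕ := K * ℓ g0 + (⌊2 * R⌋₊ + ⌊2 * R⌋₊) with hC0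
  -- key claim
  have hmain : ∀ w ∈ A ∩ B, ∃ (n : ℕ) (g h : Γ1), n ≤ K ∧
      (ℓ g : ℝ) ≤ 2 * R ∧ (ℓ h : ℝ) ≤ 2 * R ∧ w = (g0⁻¹ ^ n * g) * h⁻¹ := by
    rintro w ⟨⟨n, g, h, hg, hh, hw⟩, ⟨m, g', h', hg', hh', hw'⟩⟩
    have h2 : g0⁻¹ ^ n * (g * h⁻¹) = g0 ^ m * (g' * h'⁻¹) := hw.symm.trans hw'
    rw [inv_pow] at h2
    have key : g0 ^ (n + m) = g * h⁻¹ * (g' * h'⁻¹)⁻¹ := by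
      rw [eq_mul_inv_iff_mul_eq, pow_add, mul_assoc, ← h2, mul_inv_cancel_left]
    -- word length estimate
    have e1 : ℓ (g0 ^ (n + m)) ≤ ℓ g + ℓ h + (ℓ g' + ℓ h') := by
      calc ℓ (g0 ^ (n + m)) = ℓ (g * h⁻¹ * (g' * h'⁻¹)⁻¹) := by rw [key]
        _ ≤ ℓ (g * h⁻¹) + ℓ ((g' * h'⁻¹)⁻¹) := wordLength_mul_le hsym' hgen _ _
        _ ≤ (ℓ g + ℓ h⁻¹) + ℓ (g' * h'⁻¹) :=
            Nat.add_le_add (wordLength_mul_le hsym' hgen _ _) (wordLength_inv_le hsym' hgen _)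
        _ ≤ (ℓ g + ℓ h) + (ℓ g' + ℓ h') :=
            Nat.add_le_add (Nat.add_le_add le_rfl (wordLength_inv_le hsym' hgen _))
              (le_trans (wordLength_mul_le hsym' hgen _ _)
                (Nat.add_le_add le_rfl (wordLength_inv_le hsym' hgen _)))
    have e2 : ρ (n + m) ≤ ℓ (g0 ^ (n + m)) := compression_le _ _ le_rfl
    have e3 : ρ n ≤ ρ (n + m) := compression_mono _ _ (Nat.le_add_right _ _)
    have e4 : ρ m ≤ ρ (n + m) := compression_mono _ _ (Nat.le_add_left _ _)
    have e1' : (ℓ (g0 ^ (n + m)) : ℝ) ≤ (ℓ g : ℝ) + ℓ h + (ℓ g' + ℓ h') := by exact_mod_cast e1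
    have e2' : (ρ (n + m) : ℝ) ≤ (ℓ (g0 ^ (n + m)) : ℝ) := by exact_mod_cast e2
    have e3' : (ρ n : ℝ) ≤ (ρ (n + m) : ℝ) := by exact_mod_cast e3
    have e4' : (ρ m : ℝ) ≤ (ρ (n + m) : ℝ) := by exact_mod_cast e4
    have hρ : (ρ (n + m) : ℝ) ≤ 8 * R := by linarith
    have hnK : n ≤ K := by
      have hmem : n + m ∈ {k : ℕ | (compression (T : Set Γ1) g0 k : ℝ) ≤ 8 * R} := hρ
      have h5 := le_csSup (compression_set_bdd T hsym' hgen hg0 (8 * R)) hmem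
      have h6 : n + m ≤ K := h5
      omega
    have hρn : (ρ n : ℝ) ≤ 8 * R := le_trans e3' hρ
    exact ⟨n, g, h, hnK, by linarith, by linarith, by rw [hw, mul_assoc]⟩
  -- words for the pair
  have hpair : ∀ a b : Γ1, ∃ L : List (Γ1 × Γ1), L.length = ℓ a + ℓ b ∧
      (∀ x ∈ L, x ∈ T') ∧ L.prod = (a, b) := by
    intro a b
    obtain ⟨la, hla, hea, hpa⟩ := exists_wordLength hsym' hgen a
    obtain ⟨lb, hlb, heb, hpb⟩ := exists_wordLength hsym' hgen b
    have prodinl : ∀ l : List Γ1, ((l.map fun t => ((t : Γ1), (1 : Γ1))).prod) = (l.prod, 1) := by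
      intro l
      induction l with
      | nil => simp; rfl
      | cons x l ih => simp [ih, Prod.ext_iff]
    have prodinr : ∀ l : List Γ1, ((l.map fun t => ((1 : Γ1), (t : Γ1))).prod) = (1, l.prod) := by
      intro l
      induction l with
      | nil => simp; rfl
      | cons x l ih => simp [ih, Prod.ext_iff]
    refine ⟨(la.map fun t => (t, (1 : Γ1))) ++ (lb.map fun t => ((1 : Γ1), t)), ?_, ?_, ?_⟩
    · simp [hla, hlb]; rfl
    · intro x hx
      rcases List.mem_append.1 hx with hx | hx
      · simp only [List.mem_map] at hx
        obtain ⟨t, ht, rfl⟩ := hx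
        exact ⟨t, by simpa using hea t ht, Or.inl rfl⟩
      · simp only [List.mem_map] at hx
        obtain ⟨t, ht, rfl⟩ := hx
        exact ⟨t, by simpa using heb t ht, Or.inr rfl⟩
    · rw [List.prod_append, prodinl, prodinr, hpa, hpb, Prod.mk_mul_mk, mul_one, one_mul]
  -- the finite super-set
  set S : Set (Γ1 × Γ1) := {p : Γ1 × Γ1 | ∃ L : List (Γ1 × Γ1), L.length ≤ C0 ∧
    (∀ x ∈ L, x ∈ T') ∧ L.prod = p} with hS
  have hT'fin : T'.Finite := by
    apply Set.Finite.subset (((T.finite_toSet.image fun t => ((t : Γ1), (1 : Γ1))).union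
      (T.finite_toSet.image fun t => ((1 : Γ1), (t : Γ1)))))
    rintro p ⟨t, ht, rfl | rfl⟩
    · exact Or.inl ⟨t, ht, rfl⟩
    · exact Or.inr ⟨t, ht, rfl⟩
  have hSfin : S.Finite := ball_finite hT'fin C0
  -- membership with explicit word
  have hmem : ∀ w ∈ A ∩ B, ∃ p : Γ1 × Γ1, p ∈ S ∧ w = p.1 * p.2⁻¹ := by
    intro w hw
    obtain ⟨n, g, h, hnK, hgR, hhR, hwEq⟩ := hmain w hw
    obtain ⟨L, hL1, hL2, hL3⟩ := hpair (g0⁻¹ ^ n * g) h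
    refine ⟨(g0⁻¹ ^ n * g, h), ⟨L, ?_, hL2, hL3⟩, hwEq⟩
    have b1 : ℓ (g0⁻¹ ^ n * g) ≤ n * ℓ g0 + ℓ g := by
      calc ℓ (g0⁻¹ ^ n * g) ≤ ℓ (g0⁻¹ ^ n) + ℓ g := wordLength_mul_le hsym' hgen _ _
        _ ≤ n * ℓ g0⁻¹ + ℓ g := Nat.add_le_add (wordLength_pow_le hsym' hgen _ _) le_rfl
        _ ≤ n * ℓ g0 + ℓ g := by
            have := wordLength_inv_le hsym' hgen g0
            exact Nat.add_le_add (Nat.mul_le_mul le_rfl this) le_rfl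
    have b2 : ℓ g ≤ ⌊2 * R⌋₊ := Nat.le_floor hgR
    have b3 : ℓ h ≤ ⌊2 * R⌋₊ := Nat.le_floor hhR
    have b4 : n * ℓ g0 ≤ K * ℓ g0 := Nat.mul_le_mul hnK le_rfl
    rw [hL1]
    omega
  constructor
  · apply Set.Finite.subset (hSfin.image fun p => p.1 * p.2⁻¹)
    intro w hw
    obtain ⟨p, hp, he⟩ := hmem w hw
    exact ⟨p, hp, he.symm⟩
  · intro w hw
    obtain ⟨p, ⟨L, hL1, hL2, hL3⟩, he⟩ := hmem w hw
    refine ⟨p, ?_, he⟩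
    have h1 : wordLength T' p ≤ C0 := le_trans (wordLength_le T' hL2 hL3) hL1
    have h2 : (wordLength T' p : ℝ) ≤ (C0 : ℝ) := by exact_mod_cast h1
    have h3 : (C0 : ℝ) ≤ (ℓ g0 : ℝ) * (K : ℝ) + 4 * R := by
      have hf : (⌊2 * R⌋₊ : ℝ) ≤ 2 * R := Nat.floor_le (by linarith)
      have : (C0 : ℝ) = (K : ℝ) * (ℓ g0 : ℝ) + ((⌊2 * R⌋₊ : ℝ) + (⌊2 * R⌋₊ : ℝ)) := by
        rw [hC0]; push_cast; ring
      rw [this]; nlinarith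
    exact le_trans h2 h3
end

section
/- Let $\Gamma$ act on a compact Hausdorff space $X$ preserving a Borel probability measure $\mu$ of full support (i.e. $\mu(U) > 0$ for every nonempty open $U$), let $G$ be a group and $c : \Gamma \times X \to G$ a cocycle such that for each $x$ the map $g \mapsto c(g,x)$ is injective. Let $L : X \to G$ be a map with finite range and $\delta : \Gamma \to G$ a group homomorphism such that $c(g,x) = L(gx)^{-1} \delta(g) L(x)$ for all $g \in \Gamma$, $x \in X$. Then the kernel of $\delta$ is a finite subgroup of $\Gamma$; if moreover $\Gamma$ is icc, then $\delta$ is injective. -/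
open MeasureTheory

/-- Let a countable group `Γ` act on a compact Hausdorff space `X`
preserving a fully supported Borel probability measure `μ`, let `c` be a `G`-valued
cocycle which is injective in the group variable, and suppose
`c(g,x) = L(gx)⁻¹ δ(g) L(x)` with `L` measurable of finite range and `δ` a homomorphism.
Then `Ker δ` is finite, and if `Γ` is icc then `δ` is injective. -/
theorem stmt15 {Γ G X : Type*} [Group Γ] [Countable Γ] [Group G]
    [MeasurableSpace G] [MeasurableSingletonClass G]
    [TopologicalSpace X] [CompactSpace X] [T2Space X]
    [MeasurableSpace X] [BorelSpace X] [MulAction Γ X]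
    (hcont : ∀ g : Γ, Continuous fun x : X => g • x)
    (μ : Measure X) [IsProbabilityMeasure μ]
    (hinv : ∀ g : Γ, Measure.map (fun x : X => g • x) μ = μ)
    (hfull : ∀ U : Set X, IsOpen U → U.Nonempty → 0 < μ U)
    (c : Γ → X → G)
    (hcoc : ∀ (g1 g2 : Γ) (x : X), c (g1 * g2) x = c g1 (g2 • x) * c g2 x)
    (hinj : ∀ x : X, Function.Injective fun g : Γ => c g x)
    (L : X → G) (hLm : Measurable L) (hLr : (Set.range L).Finite)
    (δ : Γ →* G)
    (hrel : ∀ (g : Γ) (x : X), c g x = (L (g • x))⁻¹ * δ g * L x) :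
    {g : Γ | δ g = 1}.Finite ∧
      ((∀ g : Γ, g ≠ 1 → {h : Γ | ∃ k : Γ, k * g * k⁻¹ = h}.Infinite) →
        Function.Injective δ) := by
  classical
  -- find a fiber of L with positive measure
  obtain ⟨g₀, hg₀pos⟩ : ∃ g₀ : G, 0 < μ (L ⁻¹' {g₀}) := by
    by_contra h
    push_neg at h
    have hz : ∀ g : G, μ (L ⁻¹' {g}) = 0 := fun g => le_antisymm (h g) zero_le
    have hcover : (Set.univ : Set X) ⊆ ⋃ g ∈ hLr.toFinset, L ⁻¹' {g} := by
      intro x _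
      simp only [Set.mem_iUnion, Set.mem_preimage, Set.mem_singleton_iff]
      exact ⟨L x, by simp [Set.Finite.mem_toFinset], rfl⟩
    have h1 : μ Set.univ ≤ ∑ g ∈ hLr.toFinset, μ (L ⁻¹' {g}) :=
      le_trans (measure_mono hcover) (measure_biUnion_finset_le _ _)
    simp [hz, measure_univ] at h1
  set A : Set X := L ⁻¹' {g₀} with hAdef
  have hA : MeasurableSet A := hLm (measurableSet_singleton g₀)
  -- key: two kernel elements whose translated preimages of A intersect are equal
  have key : ∀ s t : Γ, δ s = 1 → δ t = 1 →
      ((fun x => s • x) ⁻¹' A ∩ (fun x => t • x) ⁻¹' A).Nonempty → s = t := by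
    intro s t hs ht ⟨x, hxs, hxt⟩
    have hLs : L (s • x) = g₀ := hxs
    have hLt : L (t • x) = g₀ := hxt
    have hc1 : c (1 : Γ) (t • x) = 1 := by
      have := hrel 1 (t • x)
      simpa using this
    have hc2 : c (s * t⁻¹) (t • x) = 1 := by
      have hδ : δ (s * t⁻¹) = 1 := by simp [hs, ht]
      have hsm : (s * t⁻¹) • (t • x) = s • x := by
        rw [smul_smul, mul_assoc]
        simp
      rw [hrel, hδ, hsm, hLs, hLt]
      group
    have := hinj (t • x) (hc2.trans hc1.symm)
    rwa [mul_inv_eq_one] at this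
  -- each translated preimage has measure μ A
  have hmeas : ∀ s : Γ, μ ((fun x => s • x) ⁻¹' A) = μ A := by
    intro s
    rw [← Measure.map_apply (hcont s).measurable hA, hinv s]
  -- kernel finite
  have hfin : {g : Γ | δ g = 1}.Finite := by
    by_contra hS
    have hS' : {g : Γ | δ g = 1}.Infinite := hS
    set e := hS'.natEmbedding with he
    set B : ℕ → Set X := fun n => (fun x => ((e n : Γ)) • x) ⁻¹' A with hB
    have hBm : ∀ n, MeasurableSet (B n) := fun n => (hcont _).measurable hA
    have hdisj : Pairwise (Function.onFun Disjoint B) := by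
      intro m n hmn
      rw [Function.onFun, Set.disjoint_iff_inter_eq_empty]
      by_contra hne
      have hnon : (B m ∩ B n).Nonempty := Set.nonempty_iff_ne_empty.2 hne
      have := key (e m : Γ) (e n : Γ) (e m).2 (e n).2 hnon
      exact hmn (e.injective (Subtype.ext this))
    have htot : μ (⋃ n, B n) = ∑' n : ℕ, μ (B n) := measure_iUnion hdisj hBm
    have hsum : ∑' n : ℕ, μ (B n) = ⊤ := by
      have : ∀ n, μ (B n) = μ A := fun n => hmeas _
      rw [tsum_congr this]
      exact ENNReal.tsum_const_eq_top_of_ne_zero hg₀pos.ne'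
    have hle : μ (⋃ n, B n) ≤ 1 := prob_le_one
    rw [htot, hsum] at hle
    simp at hle
  refine ⟨hfin, fun hicc => ?_⟩
  -- icc implies injective
  have hker : ∀ g : Γ, δ g = 1 → g = 1 := by
    intro g hg
    by_contra hg1
    have hsub : {h : Γ | ∃ k : Γ, k * g * k⁻¹ = h} ⊆ {g : Γ | δ g = 1} := by
      rintro h ⟨k, rfl⟩
      simp [hg]
    exact (hicc g hg1).mono hsub hfin
  intro a b hab
  have : δ (a * b⁻¹) = 1 := by simp [hab]
  have := hker _ this
  rwa [mul_inv_eq_one] at this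
end
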